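/- Let f be homogeneous of degree n ≥ 1 in K{X}_N. If f is primitive with respect to Δ_a, then ⟨f, g₁ ⧢ g₂⟩ = 0 for all homogeneous g₁, g₂ of degree ≥ 1, where ⟨,⟩ is the canonical pairing making the tree monomials an orthonormal basis. Conversely, if f is orthogonal to all shuffle products S ⧢ T of tree monomials S of degree k and T of degree n−k with 1 ≤ k < (n+1)/2, then f is primitive. -/

import Mathlib

noncomputable section

/-- A planar reduced rooted tree with leaves labeled by `X` and all vertex arities
at most `N` (and at least 2): the tree monomials of the free `Mag_N`-algebra
(`N = ⊤` gives the operad `Mag_ω` of Stasheff polytopes, `N = 2` gives `Mag`). -/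
inductive PT (X : Type) (N : ℕ∞) : Type
  | leaf : X → PT X N
  | node : (k : ℕ) → 2 ≤ k → (k : ℕ∞) ≤ N → (Fin k → PT X N) → PT X N

namespace PT

variable {X : Type} {N : ℕ∞}

/-- Number of leaves. -/
def nLeaves : PT X N → ℕ
  | .leaf _ => 1
  | .node k _ _ f => ∑ i : Fin k, nLeaves (f i)

/-- The list of leaf labels, from left to right. -/
def leafList : PT X N → List X
  | .leaf x => [x]
  | .node k _ _ f => ((List.finRange k).map fun i => leafList (f i)).flatten

end PT

/-- The monomial basis of the free unitary `Mag_N`-algebra: tree monomials together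
with the empty tree `none` (the unit `1`). -/
abbrev OT (X : Type) (N : ℕ∞) := Option (PT X N)

/-- The free unitary `Mag_N`-algebra `K{X}_N` on the monomial basis `OT X N`;
via this basis it is identified with its graded dual. -/
abbrev FA (K X : Type) (N : ℕ∞) [Semiring K] := OT X N →₀ K

/-- Grafting of a list of monomials (with the coherent unit action): unit factors are
discarded, the empty grafting is the unit, grafting a single tree is that tree
(contraction of a unary vertex), and otherwise a new root is introduced. -/
def graftB {X : Type} {N : ℕ∞} (l : List (OT X N)) : OT X N :=
  match l.reduceOption with
  | [] => none
  | [t] => some t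
  | l' => if h : 2 ≤ l'.length ∧ (l'.length : ℕ∞) ≤ N then
      some (.node l'.length h.1 h.2 l'.get) else none

/-- Degree (leaf count) of a basis monomial; the unit has degree 0. -/
def degOT {X : Type} {N : ℕ∞} : OT X N → ℕ
  | none => 0
  | some t => t.nLeaves

/-- Multilinear extension helper: `tup [f₁,…,fₙ]` is the element `f₁ ⊗ ⋯ ⊗ fₙ` on the
basis of lists. -/
def tup {K : Type} [Semiring K] {α : Type} : List (α →₀ K) → (List α →₀ K)
  | [] => Finsupp.single [] 1
  | g :: r => g.sum fun s c => c • (tup r).mapDomain (List.cons s)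

/-- The `n`-ary grafting operation `∨ⁿ` of `K{X}_N`, as a multilinear map. -/
def G {K X : Type} {N : ℕ∞} [Semiring K] (l : List (FA K X N)) : FA K X N :=
  (tup l).mapDomain graftB

/-- Componentwise grafting on pairs of monomials. -/
def graftB2 {X : Type} {N : ℕ∞} (l : List (OT X N × OT X N)) : OT X N × OT X N :=
  (graftB (l.map Prod.fst), graftB (l.map Prod.snd))

/-- The `n`-ary grafting operation on `K{X}_N ⊗ K{X}_N` (componentwise product;
`single (s, t)` corresponds to `s ⊗ t`). -/
def G2 {K X : Type} {N : ℕ∞} [Semiring K] (l : List ((OT X N × OT X N) →₀ K)) :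
    (OT X N × OT X N) →₀ K :=
  (tup l).mapDomain graftB2

/-- `red T I`: restriction of the tree `T` to the leaf subset `I` (leaves are numbered
from `0` from the left): vertices and edges not on a path from a leaf in `I` to the
root are deleted and unary vertices are contracted; the unit if nothing survives. -/
def red {X : Type} {N : ℕ∞} : PT X N → Finset ℕ → OT X N
  | .leaf x, I => if 0 ∈ I then some (.leaf x) else none
  | .node k _ _ f, I =>
      graftB ((List.finRange k).map fun i =>
        let off : ℕ := ∑ j ∈ Finset.univ.filter (fun j : Fin k => j < i), (f j).nLeaves
        red (f i) (((I.filter fun m => off ≤ m ∧ m < off + (f i).nLeaves)).image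
          (· - off)))

/-- `f` is primitive: `Δ(f) = f ⊗ 1 + 1 ⊗ f`. -/
def IsPrim {K X : Type} {N : ℕ∞} [Semiring K]
    (Δ : FA K X N →ₗ[K] ((OT X N × OT X N) →₀ K)) (f : FA K X N) : Prop :=
  Δ f = f.mapDomain (fun a => (a, (none : OT X N))) +
    f.mapDomain (fun a => ((none : OT X N), a))

/-- `f` is homogeneous of degree `n` (each monomial in its support has `n` leaves). -/
def Homog {K X : Type} {N : ℕ∞} [Semiring K] (f : FA K X N) (n : ℕ) : Prop :=
  ∀ t ∈ f.support, degOT t = n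

/-- The canonical pairing on `K{X}_N` making the monomial basis orthonormal. -/
def pairF {K X : Type} {N : ℕ∞} [Semiring K] (f g : FA K X N) : K :=
  f.sum fun t c => c * g t

/-!
Write `Δ = Δ_a`. For a tree `t = ∨(t₁, …, t_k)` the grafting compatibility gives
`Δ t = ∨(Δ t₁, …, Δ t_k)`, so by induction on trees `Δ t` is counital (its only terms with a
unit factor are `t ⊗ 1` and `1 ⊗ t`: a grafting of pairs has left factor `1` only if every left
factor is `1`), cocommutative and graded by leaf number; by linearity the same holds for `Δ f`
when `f` is homogeneous of degree `n ≥ 1`. Since `⟨f, g₁ ⧢ g₂⟩ = ⟨Δ f, g₁ ⊗ g₂⟩`, primitivity of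
`f` kills this pairing as soon as `g₁, g₂` have no constant term. Conversely, orthogonality to
`S ⧢ T` says that the coefficient of `S ⊗ T` in `Δ f` vanishes; cocommutativity lets one assume
`deg S ≤ deg T`, and counitality accounts for the remaining terms `f ⊗ 1 + 1 ⊗ f`.
-/

section Generic

variable {K α β M : Type}

theorem LinearMap.apply_eq_sum_smul_single [Semiring K] [AddCommMonoid M] [Module K M]
    (φ : (α →₀ K) →ₗ[K] M) (f : α →₀ K) :
    φ f = f.sum fun t c => c • φ (Finsupp.single t 1) := by
  conv_lhs => rw [← f.sum_single]
  rw [map_finsuppSum]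
  exact Finsupp.sum_congr fun t _ => by rw [← Finsupp.smul_single_one, map_smul]

theorem Finsupp.mapDomain_apply_of_fiber_subsingleton [AddCommMonoid M] {h : α → β}
    {F : α →₀ M} {a₀ : α} {b : β} (hfib : ∀ a ∈ F.support, h a = b → a = a₀) :
    F.mapDomain h b = Finsupp.single (h a₀) (F a₀) b := by
  rw [Finsupp.mapDomain, Finsupp.sum_apply, Finsupp.sum, Finset.sum_eq_single a₀]
  · intro a ha hne
    exact Finsupp.single_eq_of_ne fun hab => hne (hfib a ha hab.symm)
  · intro h0
    simp [Finsupp.notMem_support_iff.1 h0]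

theorem Finsupp.mapDomain_swap_apply [AddCommMonoid M] (F : α × α →₀ M) (p q : α) :
    F.mapDomain Prod.swap (p, q) = F (q, p) :=
  Finsupp.mapDomain_apply Prod.swap_injective F (q, p)

theorem Finsupp.mapDomain_swap_eq_self_iff [AddCommMonoid M] (F : α × α →₀ M) :
    F.mapDomain Prod.swap = F ↔ ∀ p q, F (q, p) = F (p, q) := by
  constructor
  · intro h p q
    rw [← Finsupp.mapDomain_swap_apply, h]
  · intro h
    ext ⟨p, q⟩
    rw [Finsupp.mapDomain_swap_apply, h]

theorem List.Forall₂.sum_map_add_sum_map [AddCommMonoid M] {f₁ f₂ : β → M} {g : α → M}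
    {l : List α} {m : List β} (h : List.Forall₂ (fun a x => f₁ x + f₂ x = g a) l m) :
    (m.map f₁).sum + (m.map f₂).sum = (l.map g).sum := by
  induction h with
  | nil => simp
  | cons hx _ ih =>
    simp only [List.map_cons, List.sum_cons, ← hx, ← ih]
    exact add_add_add_comm _ _ _ _

theorem List.Forall₂.eq_map {R : α → β → Prop} {P : β → Prop} {g : α → β} {l : List α}
    {m : List β} (h : List.Forall₂ R l m) (hP : ∀ x ∈ m, P x)
    (hg : ∀ a x, R a x → P x → x = g a) : m = l.map g := by
  induction h with
  | nil => rfl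
  | cons hax _ ih =>
    simp only [List.forall_mem_cons] at hP
    rw [List.map_cons, hg _ _ hax hP.1, ih hP.2]

theorem Finsupp.sum_mul_single_mul_single [Semiring K] (F : α × β →₀ K) (a : α) (b : β) :
    (F.sum fun p c => c * (Finsupp.single a 1 p.1 * Finsupp.single b 1 p.2)) = F (a, b) := by
  classical
  have hterm (p : α × β) (c : K) :
      c * (Finsupp.single a 1 p.1 * Finsupp.single b 1 p.2) = if p = (a, b) then c else 0 := by
    obtain ⟨p₁, p₂⟩ := p
    by_cases h₁ : p₁ = a <;> by_cases h₂ : p₂ = b <;> simp [h₁, h₂]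
  simp only [hterm, Finsupp.sum_ite_self_eq']

end Generic

section Tensor

variable {K α β : Type} [Semiring K]

@[simp]
theorem tup_nil : tup ([] : List (α →₀ K)) = Finsupp.single [] 1 := rfl

theorem tup_cons (g : α →₀ K) (r : List (α →₀ K)) :
    tup (g :: r) = g.sum fun s c => c • (tup r).mapDomain (List.cons s) := rfl

@[simp]
theorem tup_cons_apply_nil (g : α →₀ K) (r : List (α →₀ K)) : tup (g :: r) [] = 0 := by
  rw [tup_cons, Finsupp.sum_apply]
  refine Finset.sum_eq_zero fun s _ => ?_
  simp [Finsupp.mapDomain_of_notMem_range]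

@[simp]
theorem tup_cons_apply_cons (g : α →₀ K) (r : List (α →₀ K)) (a : α) (m : List α) :
    tup (g :: r) (a :: m) = g a * tup r m := by
  classical
  have hcons (s : α) : (tup r).mapDomain (List.cons s) (a :: m) =
      if s = a then tup r m else 0 := by
    split_ifs with h
    · exact h ▸ Finsupp.mapDomain_apply List.cons_injective _ _
    · exact Finsupp.mapDomain_of_notMem_range _ _ (by simp [h])
  rw [tup_cons, Finsupp.sum_apply]
  simp +contextual [hcons]

theorem tup_map_single (l : List α) :
    tup (l.map fun a => Finsupp.single a (1 : K)) = Finsupp.single l 1 := by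
  induction l with
  | nil => rfl
  | cons a r ih =>
    rw [List.map_cons, tup_cons, ih, Finsupp.sum_single_index (by simp), one_smul,
      Finsupp.mapDomain_single]

theorem tup_map_mapDomain (φ : α → β) (l : List (α →₀ K)) :
    tup (l.map (Finsupp.mapDomain φ)) = (tup l).mapDomain (List.map φ) := by
  induction l with
  | nil => simp [Finsupp.mapDomain_single]
  | cons g r ih =>
    have hcomm (s : α) : List.map φ ∘ List.cons s = List.cons (φ s) ∘ List.map φ := rfl
    rw [List.map_cons, tup_cons, tup_cons, ih, Finsupp.sum_mapDomain_index (by simp)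
      (fun _ _ _ => add_smul _ _ _)]
    symm
    rw [← Finsupp.lmapDomain_apply K K, map_finsuppSum]
    simp only [map_smul, Finsupp.lmapDomain_apply, ← Finsupp.mapDomain_comp, hcomm]

theorem forall₂_of_tup_ne_zero {l : List (α →₀ K)} {m : List α} (h : tup l m ≠ 0) :
    List.Forall₂ (fun g a => g a ≠ 0) l m := by
  induction l generalizing m with
  | nil =>
    cases m with
    | nil => exact .nil
    | cons a m => simp at h
  | cons g r ih =>
    cases m with
    | nil => simp at h
    | cons a m =>
      rw [tup_cons_apply_cons] at h
      exact .cons (left_ne_zero_of_mul h) (ih (right_ne_zero_of_mul h))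

theorem tup_apply_eq_one {l : List (α →₀ K)} {m : List α}
    (h : List.Forall₂ (fun g a => g a = 1) l m) : tup l m = 1 := by
  induction h with
  | nil => simp
  | cons hg _ ih => rw [tup_cons_apply_cons, hg, ih, one_mul]

end Tensor

section Grafting

variable {X : Type} {N : ℕ∞}

theorem PT.nLeaves_node_get (l : List (PT X N)) (h2 : 2 ≤ l.length)
    (hN : (l.length : ℕ∞) ≤ N) :
    (PT.node l.length h2 hN l.get).nLeaves = (l.map PT.nLeaves).sum :=
  Fin.sum_univ_fun_getElem l PT.nLeaves

theorem graftB_eq_node {l : List (OT X N)} {l' : List (PT X N)} (hl : l.reduceOption = l')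
    (h2 : 2 ≤ l'.length) (hN : (l'.length : ℕ∞) ≤ N) :
    graftB l = some (.node l'.length h2 hN l'.get) := by
  unfold graftB
  rw [hl]
  rcases l' with _ | ⟨a, _ | ⟨b, r⟩⟩
  · simp at h2
  · simp at h2
  · exact dif_pos ⟨h2, hN⟩

theorem graftB_ofFn_some {k : ℕ} (hk : 2 ≤ k) (hkN : (k : ℕ∞) ≤ N) (c : Fin k → PT X N) :
    graftB (List.ofFn fun i => some (c i)) = some (.node k hk hkN c) := by
  have hred : (List.ofFn fun i => some (c i)).reduceOption = List.ofFn c := by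
    rw [show (fun i => some (c i)) = some ∘ c from rfl, ← List.map_ofFn]
    simp [List.reduceOption]
  rw [graftB_eq_node hred (by simpa using hk) (by simpa using hkN)]
  congr!
  · simp
  · refine Function.hfunext (by simp) fun i j hij => ?_
    rw [Fin.heq_ext_iff (by simp)] at hij
    simp [hij]

theorem graftB_eq_node_of_reduceOption_eq_cons_cons {l : List (OT X N)} (hl : (l.length : ℕ∞) ≤ N)
    {a b : PT X N} {r : List (PT X N)} (h : l.reduceOption = a :: b :: r) :
    ∃ h2 hN, graftB l = some (.node (a :: b :: r).length h2 hN (a :: b :: r).get) := by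
  have hN : ((a :: b :: r).length : ℕ∞) ≤ N := by
    rw [← h]
    exact le_trans (Nat.cast_le.2 (List.reduceOption_length_le l)) hl
  exact ⟨by simp, hN, graftB_eq_node h _ _⟩

theorem graftB_eq_none_iff {l : List (OT X N)} (hl : (l.length : ℕ∞) ≤ N) :
    graftB l = none ↔ ∀ x ∈ l, x = none := by
  rw [← show l.reduceOption = [] ↔ ∀ x ∈ l, x = none from List.filterMap_eq_nil_iff]
  rcases h : l.reduceOption with _ | ⟨a, _ | ⟨b, r⟩⟩
  · simp [graftB, h]
  · simp [graftB, h]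
  · obtain ⟨_, _, hg⟩ := graftB_eq_node_of_reduceOption_eq_cons_cons hl h
    simp [hg]

theorem sum_map_degOT (l : List (OT X N)) :
    (l.map degOT).sum = (l.reduceOption.map PT.nLeaves).sum := by
  induction l with
  | nil => rfl
  | cons a r ih => cases a <;> simp [degOT, ih]

theorem degOT_graftB {l : List (OT X N)} (hl : (l.length : ℕ∞) ≤ N) :
    degOT (graftB l) = (l.map degOT).sum := by
  rw [sum_map_degOT]
  rcases h : l.reduceOption with _ | ⟨a, _ | ⟨b, r⟩⟩
  · simp [graftB, h, degOT]
  · simp [graftB, h, degOT]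
  · obtain ⟨_, _, hg⟩ := graftB_eq_node_of_reduceOption_eq_cons_cons hl h
    rw [hg, degOT, PT.nLeaves_node_get]

end Grafting

section Coproduct

variable {K X : Type} [Semiring K] {N : ℕ∞}

/-- `F` has the counit, cocommutativity and grading properties of `Δ_a f`, for `f` homogeneous
of degree `n`. -/
structure IsSymmCoproduct (f : FA K X N) (n : ℕ) (F : (OT X N × OT X N) →₀ K) : Prop where
  apply_none_left : ∀ q, F (none, q) = f q
  apply_swap : ∀ p q, F (q, p) = F (p, q)
  degOT_add_eq : ∀ p q, F (p, q) ≠ 0 → degOT p + degOT q = n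

namespace IsSymmCoproduct

variable {f f' : FA K X N} {n : ℕ} {F F' : (OT X N × OT X N) →₀ K}

theorem apply_none_right (hF : IsSymmCoproduct f n F) (p : OT X N) : F (p, none) = f p :=
  (hF.apply_swap none p).trans (hF.apply_none_left p)

theorem zero : IsSymmCoproduct (0 : FA K X N) n 0 :=
  ⟨fun _ => rfl, fun _ _ => rfl, fun _ _ h => absurd rfl h⟩

theorem add (hF : IsSymmCoproduct f n F) (hF' : IsSymmCoproduct f' n F') :
    IsSymmCoproduct (f + f') n (F + F') where
  apply_none_left q := by simp [hF.apply_none_left, hF'.apply_none_left]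
  apply_swap p q := by simp [hF.apply_swap, hF'.apply_swap]
  degOT_add_eq p q h := by
    by_cases hFpq : F (p, q) = 0
    · exact hF'.degOT_add_eq p q (by simpa [hFpq] using h)
    · exact hF.degOT_add_eq p q hFpq

theorem smul (hF : IsSymmCoproduct f n F) (c : K) : IsSymmCoproduct (c • f) n (c • F) where
  apply_none_left q := by simp [hF.apply_none_left]
  apply_swap p q := by simp [hF.apply_swap]
  degOT_add_eq p q h := hF.degOT_add_eq p q (right_ne_zero_of_mul h)

end IsSymmCoproduct

theorem isSymmCoproduct_leaf (x : X) :
    IsSymmCoproduct (Finsupp.single (some (.leaf x : PT X N)) (1 : K)) 1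
      (Finsupp.single (some (.leaf x), none) 1 + Finsupp.single (none, some (.leaf x)) 1) where
  apply_none_left q := by classical simp [Finsupp.single_apply]
  apply_swap p q := by
    classical
    simp only [Finsupp.add_apply, Finsupp.single_apply, Prod.mk.injEq]
    grind
  degOT_add_eq p q h := by
    classical
    simp only [Finsupp.add_apply, Finsupp.single_apply, Prod.mk.injEq] at h
    split_ifs at h with h₁ h₂ h₂
    · obtain ⟨rfl, rfl⟩ := h₁; rfl
    · obtain ⟨rfl, rfl⟩ := h₁; rfl
    · obtain ⟨rfl, rfl⟩ := h₂; rfl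
    · simp at h

end Coproduct

section GraftedCoproduct

variable {K X : Type} [Semiring K] {N : ℕ∞} {ts : List (PT X N)} {T₀ : PT X N}
  {DF : PT X N → (OT X N × OT X N) →₀ K}

theorem forall₂_of_tup_map_ne_zero {m : List (OT X N × OT X N)} (hm : tup (ts.map DF) m ≠ 0) :
    List.Forall₂ (fun s x => s ∈ ts ∧ DF s x ≠ 0) ts m :=
  (List.forall₂_and_left _ _).2
    ⟨fun _ hs => hs, List.forall₂_map_left_iff.1 (forall₂_of_tup_ne_zero hm)⟩

theorem eq_map_of_tup_ne_zero_of_graftB_fst_eq_none (hlen : (ts.length : ℕ∞) ≤ N)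
    (hDF : ∀ s ∈ ts, IsSymmCoproduct (Finsupp.single (some s) 1) s.nLeaves (DF s))
    {m : List (OT X N × OT X N)} (hm : tup (ts.map DF) m ≠ 0)
    (hfst : graftB (m.map Prod.fst) = none) :
    m = ts.map fun s => (none, some s) := by
  have hrel := forall₂_of_tup_map_ne_zero hm
  rw [graftB_eq_none_iff (by rwa [List.length_map, ← hrel.length_eq]), List.forall_mem_map] at hfst
  refine hrel.eq_map hfst fun s x ⟨hs, hne⟩ hx => ?_
  obtain ⟨p, q⟩ := x
  obtain rfl : p = none := hx
  rw [(hDF s hs).apply_none_left, Finsupp.single_apply_ne_zero] at hne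
  rw [hne.1]

theorem G2_apply_none_left (hlen : (ts.length : ℕ∞) ≤ N)
    (hT₀ : graftB (ts.map some) = some T₀)
    (hDF : ∀ s ∈ ts, IsSymmCoproduct (Finsupp.single (some s) 1) s.nLeaves (DF s))
    (q : OT X N) : G2 (ts.map DF) (none, q) = Finsupp.single (some T₀) 1 q := by
  have hgraft : graftB2 (ts.map fun s => ((none : OT X N), some s)) = (none, some T₀) := by
    simp only [graftB2, List.map_map, Function.comp_def]
    rw [← hT₀, (graftB_eq_none_iff (by simpa using hlen)).2 (by simp)]
  have hone : tup (ts.map DF) (ts.map fun s => (none, some s)) = 1 := by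
    refine tup_apply_eq_one (List.forall₂_map_left_iff.2 (List.forall₂_map_right_iff.2
      (List.forall₂_same.2 fun s hs => ?_)))
    simp [(hDF s hs).apply_none_left]
  rw [G2, Finsupp.mapDomain_apply_of_fiber_subsingleton (a₀ := ts.map fun s => (none, some s)),
    hone, hgraft]
  · exact Finsupp.single_apply_left (Prod.mk_right_injective none) _ _ _
  · intro m hm hmq
    exact eq_map_of_tup_ne_zero_of_graftB_fst_eq_none hlen hDF (Finsupp.mem_support_iff.1 hm)
      (congrArg Prod.fst hmq)

theorem G2_map_mapDomain_swap (l : List ((OT X N × OT X N) →₀ K)) :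
    G2 (l.map (Finsupp.mapDomain Prod.swap)) = (G2 l).mapDomain Prod.swap := by
  have hcomm : graftB2 ∘ List.map Prod.swap = Prod.swap ∘ graftB2 (X := X) (N := N) := by
    funext m
    simp only [Function.comp, graftB2, List.map_map]
    rfl
  rw [G2, G2, tup_map_mapDomain, ← Finsupp.mapDomain_comp, hcomm, Finsupp.mapDomain_comp]

theorem G2_apply_swap
    (hDF : ∀ s ∈ ts, IsSymmCoproduct (Finsupp.single (some s) 1) s.nLeaves (DF s))
    (p q : OT X N) : G2 (ts.map DF) (q, p) = G2 (ts.map DF) (p, q) := by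
  have hsymm : (ts.map DF).map (Finsupp.mapDomain Prod.swap) = ts.map DF := by
    rw [List.map_map]
    exact List.map_congr_left fun s hs =>
      (Finsupp.mapDomain_swap_eq_self_iff _).2 (hDF s hs).apply_swap
  revert p q
  rw [← Finsupp.mapDomain_swap_eq_self_iff, ← G2_map_mapDomain_swap, hsymm]

theorem G2_degOT_add_eq (hlen : (ts.length : ℕ∞) ≤ N)
    (hT₀ : graftB (ts.map some) = some T₀)
    (hDF : ∀ s ∈ ts, IsSymmCoproduct (Finsupp.single (some s) 1) s.nLeaves (DF s))
    (p q : OT X N) (hpq : G2 (ts.map DF) (p, q) ≠ 0) : degOT p + degOT q = T₀.nLeaves := by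
  classical
  obtain ⟨m, hm, hmpq⟩ := Finset.mem_image.1
    (Finsupp.mapDomain_support (Finsupp.mem_support_iff.2 hpq))
  have hrel := forall₂_of_tup_map_ne_zero (Finsupp.mem_support_iff.1 hm)
  have hmlen : ((m.length : ℕ) : ℕ∞) ≤ N := by rwa [← hrel.length_eq]
  have hT₀leaves : T₀.nLeaves = (ts.map PT.nLeaves).sum := by
    have := degOT_graftB (l := ts.map some) (by simpa using hlen)
    rwa [hT₀, List.map_map] at this
  simp only [graftB2, Prod.mk.injEq] at hmpq
  rw [← hmpq.1, ← hmpq.2, degOT_graftB (by simpa using hmlen),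
    degOT_graftB (by simpa using hmlen), List.map_map, List.map_map, hT₀leaves]
  exact List.Forall₂.sum_map_add_sum_map
    (hrel.imp fun s x ⟨hs, hne⟩ => (hDF s hs).degOT_add_eq x.1 x.2 hne)

theorem isSymmCoproduct_G2 (hlen : (ts.length : ℕ∞) ≤ N)
    (hT₀ : graftB (ts.map some) = some T₀)
    (hDF : ∀ s ∈ ts, IsSymmCoproduct (Finsupp.single (some s) 1) s.nLeaves (DF s)) :
    IsSymmCoproduct (Finsupp.single (some T₀) 1) T₀.nLeaves (G2 (ts.map DF)) :=
  ⟨G2_apply_none_left hlen hT₀ hDF, G2_apply_swap hDF, G2_degOT_add_eq hlen hT₀ hDF⟩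

end GraftedCoproduct

section TreeCoproduct

variable {K X : Type} [Semiring K] {N : ℕ∞}

theorem Homog.apply_none {f : FA K X N} {n : ℕ} (hf : Homog f n) (hn : 1 ≤ n) : f none = 0 := by
  by_contra h
  have := hf none (Finsupp.mem_support_iff.2 h)
  simp only [degOT] at this
  omega

theorem isSymmCoproduct_apply_single (Δ : FA K X N →ₗ[K] ((OT X N × OT X N) →₀ K))
    (hΔx : ∀ x : X, Δ (Finsupp.single (some (PT.leaf x)) 1) =
      Finsupp.single ((some (PT.leaf x) : OT X N), (none : OT X N)) 1 +
        Finsupp.single ((none : OT X N), (some (PT.leaf x) : OT X N)) 1)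
    (hΔm : ∀ l : List (FA K X N), 2 ≤ l.length → (l.length : ℕ∞) ≤ N →
      Δ (G l) = G2 (l.map (Δ ·)))
    (t : PT X N) :
    IsSymmCoproduct (Finsupp.single (some t) 1) t.nLeaves (Δ (Finsupp.single (some t) 1)) := by
  induction t with
  | leaf x =>
    rw [hΔx]
    exact isSymmCoproduct_leaf x
  | node k hk hkN c ih =>
    have hlen : (List.ofFn c).length = k := List.length_ofFn
    have hT₀ : graftB ((List.ofFn c).map some) = some (.node k hk hkN c) := by
      rw [List.map_ofFn]
      exact graftB_ofFn_some hk hkN c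
    have hG : (Finsupp.single (some (.node k hk hkN c)) 1 : FA K X N) =
        G ((List.ofFn c).map fun s => Finsupp.single (some s) 1) := by
      rw [G, ← hT₀, ← Finsupp.mapDomain_single, ← tup_map_single, List.map_map]
      rfl
    have hΔG : Δ (Finsupp.single (some (.node k hk hkN c)) 1) =
        G2 ((List.ofFn c).map fun s => Δ (Finsupp.single (some s) 1)) := by
      rw [hG, hΔm _ (by simpa [hlen] using hk) (by simpa [hlen] using hkN), List.map_map]
      rfl
    rw [hΔG]
    refine isSymmCoproduct_G2 (K := K) (by rwa [hlen]) hT₀ fun s hs => ?_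
    obtain ⟨i, rfl⟩ := List.mem_ofFn.1 hs
    exact ih i

theorem isSymmCoproduct_apply_of_homog (Δ : FA K X N →ₗ[K] ((OT X N × OT X N) →₀ K))
    (hΔ : ∀ t : PT X N,
      IsSymmCoproduct (Finsupp.single (some t) 1) t.nLeaves (Δ (Finsupp.single (some t) 1)))
    {f : FA K X N} {n : ℕ} (hn : 1 ≤ n) (hf : Homog f n) : IsSymmCoproduct f n (Δ f) := by
  have key : IsSymmCoproduct (f.sum Finsupp.single) n (Δ (f.sum Finsupp.single)) := by
    refine Finset.sum_induction _ (fun g => IsSymmCoproduct g n (Δ g))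
      (fun g₁ g₂ h₁ h₂ => by rw [map_add]; exact h₁.add h₂) (by rw [map_zero]; exact .zero) ?_
    intro t ht
    cases t with
    | none => exact absurd (hf.apply_none hn) (Finsupp.mem_support_iff.1 ht)
    | some t =>
      rw [← Finsupp.smul_single_one, map_smul, ← hf _ ht]
      exact (hΔ t).smul _
  rwa [f.sum_single] at key

theorem IsSymmCoproduct.apply_some_some_eq_zero {f : FA K X N} {n : ℕ}
    {F : (OT X N × OT X N) →₀ K} (hF : IsSymmCoproduct f n F)
    (hhalf : ∀ S T : PT X N, 2 * S.nLeaves < n + 1 → S.nLeaves + T.nLeaves = n →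
      F (some S, some T) = 0) (S T : PT X N) : F (some S, some T) = 0 := by
  by_contra hST
  have hdeg : S.nLeaves + T.nLeaves = n := hF.degOT_add_eq _ _ hST
  by_cases hS : 2 * S.nLeaves < n + 1
  · exact hST (hhalf S T hS hdeg)
  · exact hST ((hF.apply_swap _ _).symm.trans (hhalf T S (by omega) (by omega)))

theorem isPrim_of_isSymmCoproduct (Δ : FA K X N →ₗ[K] ((OT X N × OT X N) →₀ K))
    {f : FA K X N} {n : ℕ} (hF : IsSymmCoproduct f n (Δ f)) (hf : f none = 0)
    (hvanish : ∀ S T : PT X N, Δ f (some S, some T) = 0) : IsPrim Δ f := by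
  ext ⟨p, q⟩
  cases p <;> cases q <;>
    simp [Finsupp.mapDomain_apply, Finsupp.mapDomain_of_notMem_range, Prod.mk_right_injective,
      Prod.mk_left_injective, hF.apply_none_left, hF.apply_none_right, hf, hvanish]

end TreeCoproduct

section Pairing

variable {K X : Type} [Semiring K] {N : ℕ∞}

theorem pairF_sh_eq_sum (Δ : FA K X N →ₗ[K] ((OT X N × OT X N) →₀ K))
    (sh : FA K X N → FA K X N → FA K X N)
    (hsh : ∀ (f g : FA K X N) (t : OT X N),
      sh f g t = (Δ (Finsupp.single t 1)).sum fun p c => c * (f p.1 * g p.2))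
    (f g₁ g₂ : FA K X N) :
    pairF f (sh g₁ g₂) = (Δ f).sum fun p c => c * (g₁ p.1 * g₂ p.2) := by
  let φ := Finsupp.linearCombination K (fun p : OT X N × OT X N => g₁ p.1 * g₂ p.2) ∘ₗ Δ
  have hφ (g : FA K X N) : φ g = (Δ g).sum fun p c => c * (g₁ p.1 * g₂ p.2) :=
    Finsupp.linearCombination_apply K _
  rw [← hφ, LinearMap.apply_eq_sum_smul_single φ f, pairF]
  exact Finsupp.sum_congr fun t _ => by rw [hsh, hφ, smul_eq_mul]

end Pairing

theorem stmt14_general (K X : Type) [Field K] (N : ℕ∞)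
    (Δ : FA K X N →ₗ[K] ((OT X N × OT X N) →₀ K))
    (hΔx : ∀ x : X, Δ (Finsupp.single (some (PT.leaf x)) 1) =
      Finsupp.single ((some (PT.leaf x) : OT X N), (none : OT X N)) 1 +
        Finsupp.single ((none : OT X N), (some (PT.leaf x) : OT X N)) 1)
    (hΔm : ∀ l : List (FA K X N), 2 ≤ l.length → (l.length : ℕ∞) ≤ N →
      Δ (G l) = G2 (l.map (Δ ·)))
    (sh : FA K X N → FA K X N → FA K X N)
    (hsh : ∀ (f g : FA K X N) (t : OT X N),
      sh f g t = (Δ (Finsupp.single t 1)).sum fun p c => c * (f p.1 * g p.2))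
    (f : FA K X N) (n : ℕ) (hn : 1 ≤ n) (hf : Homog f n) :
    (IsPrim Δ f →
      ∀ (g₁ g₂ : FA K X N) (m₁ m₂ : ℕ), 1 ≤ m₁ → 1 ≤ m₂ →
        Homog g₁ m₁ → Homog g₂ m₂ → pairF f (sh g₁ g₂) = 0) ∧
    ((∀ S T : PT X N, 2 * S.nLeaves < n + 1 → S.nLeaves + T.nLeaves = n →
        pairF f (sh (Finsupp.single (some S : OT X N) 1)
          (Finsupp.single (some T : OT X N) 1)) = 0) →
      IsPrim Δ f) := by
  refine ⟨fun hprim g₁ g₂ m₁ m₂ hm₁ hm₂ hg₁ hg₂ => ?_, fun horth => ?_⟩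
  · rw [pairF_sh_eq_sum Δ sh hsh, hprim,
      Finsupp.sum_add_index' (by simp) fun _ _ _ => add_mul _ _ _,
      Finsupp.sum_mapDomain_index (by simp) fun _ _ _ => add_mul _ _ _,
      Finsupp.sum_mapDomain_index (by simp) fun _ _ _ => add_mul _ _ _]
    simp [hg₁.apply_none hm₁, hg₂.apply_none hm₂]
  · have hF := isSymmCoproduct_apply_of_homog Δ (isSymmCoproduct_apply_single Δ hΔx hΔm) hn hf
    refine isPrim_of_isSymmCoproduct Δ hF (hf.apply_none hn)
      (hF.apply_some_some_eq_zero fun S T hS hST => ?_)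
    rw [← horth S T hS hST, pairF_sh_eq_sum Δ sh hsh, Finsupp.sum_mul_single_mul_single]

/-- Let `f` be homogeneous of degree `n ≥ 1` in the free unitary
`Mag_N`-algebra `K{X}_N` (`2 ≤ N ≤ ω`). If `f` is primitive for `Δ_a` then
`⟨f, g₁ ⧢ g₂⟩ = 0` for all homogeneous `g₁, g₂` of degree `≥ 1` (the pairing `⟨,⟩`
making tree monomials orthonormal); conversely if `f` is orthogonal to all shuffle
products `S ⧢ T` of tree monomials with `deg S = k`, `deg T = n - k`,
`1 ≤ k < (n+1)/2`, then `f` is primitive. -/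
theorem stmt14 (K X : Type) [Field K] [CharZero K] (N : ℕ∞) (hN : 2 ≤ N)
    (Δ : FA K X N →ₗ[K] ((OT X N × OT X N) →₀ K))
    (hΔ1 : Δ (Finsupp.single (none : OT X N) 1) =
      Finsupp.single ((none : OT X N), (none : OT X N)) 1)
    (hΔx : ∀ x : X, Δ (Finsupp.single (some (PT.leaf x)) 1) =
      Finsupp.single ((some (PT.leaf x) : OT X N), (none : OT X N)) 1 +
        Finsupp.single ((none : OT X N), (some (PT.leaf x) : OT X N)) 1)
    (hΔm : ∀ l : List (FA K X N), 2 ≤ l.length → (l.length : ℕ∞) ≤ N →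
      Δ (G l) = G2 (l.map (Δ ·)))
    (sh : FA K X N → FA K X N → FA K X N)
    (hsh : ∀ (f g : FA K X N) (t : OT X N),
      sh f g t = (Δ (Finsupp.single t 1)).sum fun p c => c * (f p.1 * g p.2))
    (f : FA K X N) (n : ℕ) (hn : 1 ≤ n) (hf : Homog f n) :
    (IsPrim Δ f →
      ∀ (g₁ g₂ : FA K X N) (m₁ m₂ : ℕ), 1 ≤ m₁ → 1 ≤ m₂ →
        Homog g₁ m₁ → Homog g₂ m₂ → pairF f (sh g₁ g₂) = 0) ∧
    ((∀ S T : PT X N, 2 * S.nLeaves < n + 1 → S.nLeaves + T.nLeaves = n →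
        pairF f (sh (Finsupp.single (some S : OT X N) 1)
          (Finsupp.single (some T : OT X N) 1)) = 0) →
      IsPrim Δ f) :=
  stmt14_general K X N Δ hΔx hΔm sh hsh f n hn hf

end
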